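/- arXiv:2004.02240 — 7 statements merged into one kernel-verified Lean document; each statement's English description precedes it below -/
import Mathlib

section
/- Let n, s ≥ 1 be integers and define M(n,s) = C(n+s-1, s) + C(n+s-2, s-1). If F is a finite set of unit vectors in ℝⁿ (i.e., F ⊆ Sⁿ⁻¹) such that the set of inner products {⟨p,q⟩ : p, q ∈ F, p ≠ q} has at most s elements, then |F| ≤ M(n,s). -/
/-!
For `x ∈ F` let `f_x(y) = ∏_{α ∈ A, α ≠ 1} (⟪y, x⟫ - α)`, where `A` is the set of inner products
of distinct points of `F`. Then `f_x` is a polynomial of degree at most `s` that vanishes on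
`F \ {x}` but not at `x`, so restriction to `F` maps the polynomials of degree `≤ s` onto all
functions `F → ℝ`. On the sphere `‖y‖² = 1`, so every polynomial of degree `≤ s` agrees there with
a sum of homogeneous polynomials of degrees `s` and `s - 1`; these spaces have dimensions
`C(n+s-1, s)` and `C(n+s-2, s-1)`.
-/

open MvPolynomial Module Finset RealInnerProductSpace

theorem finrank_homogeneousSubmodule {σ R : Type*} [Fintype σ] [CommRing R]
    [StrongRankCondition R] (k : ℕ) :
    finrank R (homogeneousSubmodule σ R k) = (Fintype.card σ + k - 1).choose k := by
  classical
  have hdeg : {d : σ →₀ ℕ | d.degree = k} = ↑(univ.finsuppAntidiag k : Finset (σ →₀ ℕ)) := by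
    ext d; simp [mem_finsuppAntidiag, Finsupp.degree_eq_sum]
  rw [homogeneousSubmodule_eq_finsupp_supported,
    (AddMonoidAlgebra.supportedEquivFinsupp _).finrank_eq, hdeg]
  simp [card_finsuppAntidiag_nat_eq_choose]

noncomputable def normSqPoly (σ R : Type*) [Fintype σ] [CommSemiring R] : MvPolynomial σ R :=
  ∑ i, X i ^ 2

theorem isHomogeneous_normSqPoly (σ R : Type*) [Fintype σ] [CommSemiring R] :
    (normSqPoly σ R).IsHomogeneous 2 :=
  IsHomogeneous.sum _ _ _ fun i _ => (isHomogeneous_X R i).pow 2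

section Sphere

variable {n : ℕ}

noncomputable def evalOn (X : Set (EuclideanSpace ℝ (Fin n))) :
    MvPolynomial (Fin n) ℝ →ₗ[ℝ] X → ℝ where
  toFun p x := eval (fun i => (x : EuclideanSpace ℝ (Fin n)) i) p
  map_add' p q := by ext; simp
  map_smul' c p := by ext; simp

@[simp]
theorem evalOn_apply (X : Set (EuclideanSpace ℝ (Fin n))) (p : MvPolynomial (Fin n) ℝ) (x : X) :
    evalOn X p x = eval (fun i => (x : EuclideanSpace ℝ (Fin n)) i) p := rfl

theorem eval_normSqPoly (x : EuclideanSpace ℝ (Fin n)) :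
    eval (fun i => x i) (normSqPoly (Fin n) ℝ) = ‖x‖ ^ 2 := by
  simp [normSqPoly, EuclideanSpace.norm_sq_eq]

theorem evalOn_mul_normSqPoly_pow {X : Set (EuclideanSpace ℝ (Fin n))} (hX : ∀ x ∈ X, ‖x‖ = 1)
    (p : MvPolynomial (Fin n) ℝ) (k : ℕ) :
    evalOn X (p * normSqPoly (Fin n) ℝ ^ k) = evalOn X p := by
  ext x
  simp [eval_normSqPoly, hX x x.2]

/-- On the sphere, multiplying by powers of `‖x‖²` lifts the degree of a homogeneous component
to `s` or `s - 1` without changing its values. -/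
theorem evalOn_mem_map_homogeneousSubmodule {X : Set (EuclideanSpace ℝ (Fin n))}
    (hX : ∀ x ∈ X, ‖x‖ = 1) {s : ℕ} {p : MvPolynomial (Fin n) ℝ} (hp : p.totalDegree ≤ s) :
    evalOn X p ∈ (homogeneousSubmodule (Fin n) ℝ s ⊔
      homogeneousSubmodule (Fin n) ℝ (s - 1)).map (evalOn X) := by
  rw [← sum_homogeneousComponent p, map_sum]
  refine Submodule.sum_mem _ fun d hd => ?_
  have hds : d ≤ s := by have := mem_range.mp hd; omega
  rw [← evalOn_mul_normSqPoly_pow hX _ ((s - d) / 2)]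
  refine Submodule.mem_map_of_mem ?_
  have hhom := (homogeneousComponent_isHomogeneous d p).mul
    ((isHomogeneous_normSqPoly (Fin n) ℝ).pow ((s - d) / 2))
  rcases Nat.even_or_odd (s - d) with ⟨m, hm⟩ | ⟨m, hm⟩
  · exact Submodule.mem_sup_left (by simpa [show d + 2 * ((s - d) / 2) = s by omega] using hhom)
  · exact Submodule.mem_sup_right
      (by simpa [show d + 2 * ((s - d) / 2) = s - 1 by omega] using hhom)

theorem finrank_map_restrictTotalDegree_le {X : Set (EuclideanSpace ℝ (Fin n))}
    (hX : ∀ x ∈ X, ‖x‖ = 1) (s : ℕ) :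
    finrank ℝ ((restrictTotalDegree (Fin n) ℝ s).map (evalOn X)) ≤
      (n + s - 1).choose s + (n + s - 2).choose (s - 1) := by
  have : ∀ k, FiniteDimensional ℝ (homogeneousSubmodule (Fin n) ℝ k) := fun k =>
    Module.Finite.iff_fg.mpr (homogeneousSubmodule_fg _ _ k)
  have hmap : (restrictTotalDegree (Fin n) ℝ s).map (evalOn X) ≤
      (homogeneousSubmodule (Fin n) ℝ s ⊔
        homogeneousSubmodule (Fin n) ℝ (s - 1)).map (evalOn X) := by
    rintro _ ⟨p, hp, rfl⟩
    exact evalOn_mem_map_homogeneousSubmodule hX ((mem_restrictTotalDegree _ _ _).mp hp)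
  calc _ ≤ finrank ℝ ((homogeneousSubmodule (Fin n) ℝ s ⊔
          homogeneousSubmodule (Fin n) ℝ (s - 1)).map (evalOn X)) := Submodule.finrank_mono hmap
    _ ≤ finrank ℝ ↥(homogeneousSubmodule (Fin n) ℝ s ⊔ homogeneousSubmodule (Fin n) ℝ (s - 1)) :=
        Submodule.finrank_map_le _ _
    _ ≤ finrank ℝ (homogeneousSubmodule (Fin n) ℝ s) +
          finrank ℝ (homogeneousSubmodule (Fin n) ℝ (s - 1)) :=
        Submodule.finrank_add_le_finrank_add_finrank _ _
    _ = _ := by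
      rw [finrank_homogeneousSubmodule, finrank_homogeneousSubmodule, Fintype.card_fin]
      -- at `s = 0` the truncated `s - 1` makes both second binomials `choose 0 = 1`
      rcases s with _ | s
      · simp
      · rw [show n + (s + 1) - 2 = n + (s + 1 - 1) - 1 by omega]

noncomputable def annihilatingPoly (p : EuclideanSpace ℝ (Fin n)) (A : Finset ℝ) :
    MvPolynomial (Fin n) ℝ :=
  ∏ α ∈ A, (∑ i, C (p i) * X i - C α)

theorem totalDegree_annihilatingPoly_le (p : EuclideanSpace ℝ (Fin n)) (A : Finset ℝ) :
    (annihilatingPoly p A).totalDegree ≤ #A := by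
  refine (totalDegree_finsetProd _ _).trans ?_
  rw [card_eq_sum_ones]
  refine sum_le_sum fun α _ => (totalDegree_sub_C_le _ _).trans ?_
  exact (IsHomogeneous.sum _ _ _ fun i _ => isHomogeneous_C_mul_X (p i) i).totalDegree_le

theorem eval_annihilatingPoly (p x : EuclideanSpace ℝ (Fin n)) (A : Finset ℝ) :
    eval (fun i => x i) (annihilatingPoly p A) = ∏ α ∈ A, (⟪x, p⟫ - α) := by
  simp [annihilatingPoly, PiLp.inner_apply, mul_comm]

theorem evalOn_annihilatingPoly {X : Set (EuclideanSpace ℝ (Fin n))} (hX : ∀ x ∈ X, ‖x‖ = 1)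
    {A : Finset ℝ} (hinner : ∀ x ∈ X, ∀ y ∈ X, x ≠ y → ⟪x, y⟫ ∈ A) (x : X) :
    evalOn X (annihilatingPoly x (A.erase 1)) = (∏ α ∈ A.erase 1, (1 - α)) • Pi.single x 1 := by
  ext y
  rw [evalOn_apply, eval_annihilatingPoly]
  by_cases hyx : y = x
  · subst hyx
    simp [hX y y.2]
  · have hne : (y : EuclideanSpace ℝ (Fin n)) ≠ x := Subtype.coe_injective.ne hyx
    have hmem : ⟪(y : EuclideanSpace ℝ (Fin n)), x⟫ ∈ A.erase 1 :=
      mem_erase.mpr ⟨fun h => hne ((inner_eq_one_iff_of_norm_eq_one (hX _ y.2) (hX _ x.2)).mp h),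
        hinner _ y.2 _ x.2 hne⟩
    simp [prod_eq_zero hmem (sub_self _), hyx]

theorem map_restrictTotalDegree_eq_top {X : Set (EuclideanSpace ℝ (Fin n))} [Finite X]
    (hX : ∀ x ∈ X, ‖x‖ = 1) {s : ℕ} (A : Finset ℝ) (hA : #A ≤ s)
    (hinner : ∀ x ∈ X, ∀ y ∈ X, x ≠ y → ⟪x, y⟫ ∈ A) :
    (restrictTotalDegree (Fin n) ℝ s).map (evalOn X) = ⊤ := by
  rw [eq_top_iff, ← (Pi.basisFun ℝ X).span_eq, Submodule.span_le]
  rintro _ ⟨x, rfl⟩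
  have hc : ∏ α ∈ A.erase 1, (1 - α) ≠ 0 :=
    prod_ne_zero_iff.mpr fun α hα => sub_ne_zero.mpr (ne_of_mem_erase hα).symm
  refine ⟨(∏ α ∈ A.erase 1, (1 - α))⁻¹ • annihilatingPoly x (A.erase 1), ?_, ?_⟩
  · refine Submodule.smul_mem _ _ ((mem_restrictTotalDegree _ _ _).mpr ?_)
    exact (totalDegree_annihilatingPoly_le _ _).trans ((card_erase_le).trans hA)
  · rw [map_smul, evalOn_annihilatingPoly hX hinner, smul_smul, inv_mul_cancel₀ hc, one_smul,
      Pi.basisFun_apply]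

end Sphere

theorem delsarte_goethals_seidel_bound_general (n s : ℕ)
    (F : Finset (EuclideanSpace ℝ (Fin n)))
    (hunit : ∀ p ∈ F, ‖p‖ = 1)
    (hdist : {r : ℝ | ∃ p ∈ F, ∃ q ∈ F, p ≠ q ∧ ⟪p, q⟫ = r}.ncard ≤ s) :
    F.card ≤ (n + s - 1).choose s + (n + s - 2).choose (s - 1) := by
  set S := {r : ℝ | ∃ p ∈ F, ∃ q ∈ F, p ≠ q ∧ ⟪p, q⟫ = r}
  have hS : S.Finite := ((F ×ˢ F).finite_toSet.image fun z => ⟪z.1, z.2⟫).subset <| by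
    rintro _ ⟨p, hp, q, hq, -, rfl⟩
    exact ⟨(p, q), mem_product.mpr ⟨hp, hq⟩, rfl⟩
  have htop := map_restrictTotalDegree_eq_top (X := ↑F) (s := s) hunit hS.toFinset
    (by rwa [← Set.ncard_eq_toFinset_card S hS]) fun p hp q hq hpq =>
      hS.mem_toFinset.mpr ⟨p, hp, q, hq, hpq, rfl⟩
  calc F.card = finrank ℝ (↥(F : Set (EuclideanSpace ℝ (Fin n))) → ℝ) := by simp
    _ = finrank ℝ ((restrictTotalDegree (Fin n) ℝ s).map (evalOn ↑F)) := by rw [htop, finrank_top]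
    _ ≤ _ := finrank_map_restrictTotalDegree_le hunit s

/-- Delsarte–Goethals–Seidel bound: a finite spherical `s`-distance set `F ⊆ Sⁿ⁻¹`
has at most `C(n+s-1, s) + C(n+s-2, s-1)` elements. -/
theorem delsarte_goethals_seidel_bound (n s : ℕ) (hn : 1 ≤ n) (hs : 1 ≤ s)
    (F : Finset (EuclideanSpace ℝ (Fin n)))
    (hunit : ∀ p ∈ F, ‖p‖ = 1)
    (hdist : {r : ℝ | ∃ p ∈ F, ∃ q ∈ F, p ≠ q ∧ ⟪p, q⟫ = r}.ncard ≤ s) :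
    F.card ≤ (n + s - 1).choose s + (n + s - 2).choose (s - 1) :=
  delsarte_goethals_seidel_bound_general n s F hunit hdist
end

section
/- Let n ≥ 1 be a positive integer and let s > 0 be an even integer. Let S be a finite set of unit vectors in ℝⁿ whose set of pairwise inner products is contained in {t₁, …, t_s} with t₁ + ⋯ + t_s ≥ 0. Then |S| ≤ M(n, s-2) + ((n+2s-2)/s)·C(n+s-1, s-1), where M(n,s) = C(n+s-1, s) + C(n+s-2, s-1). -/
/-!
The annihilator method of Delsarte, Goethals and Seidel. For `p ∈ S` the polynomial
`x ↦ ∏ (⟪x, p⟫ - c)`, the product running over the inner products `c ≠ 1`, vanishes on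
`S \ {p}` but not at `p`, so these `|S|` functions on `S` are linearly independent. They have
degree at most `s`, and on the unit sphere multiplying by `∑ xⱼ² = 1` turns a homogeneous
polynomial of degree `d` into one of degree `d + 2`; hence they all lie in the span of the
homogeneous polynomials of degrees `s` and `s - 1`, whose dimension is at most
`M(n, s) = C(n+s-1, s) + C(n+s-2, s-1)`. Finally `M(n, s) ≤ ((n+2s-2)/s)·C(n+s-1, s-1)`, since
`s·C(n+s-1, s) = n·C(n+s-1, s-1)` and `C(n+s-2, s-1) ≤ C(n+s-1, s-1)`.
-/

open RealInnerProductSpace Metric Module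

namespace SphericalCode

variable {ι : Type*} (A : Set (EuclideanSpace ℝ ι))

noncomputable def monomialFun (m : Multiset ι) : A → ℝ :=
  fun x => (m.map fun j => (x : EuclideanSpace ℝ ι) j).prod

noncomputable def homogeneousFun (d : ℕ) : Submodule ℝ (A → ℝ) :=
  Submodule.span ℝ (monomialFun A '' {m | m.card = d})

noncomputable def polynomialFun (d : ℕ) : Submodule ℝ (A → ℝ) :=
  Submodule.span ℝ (monomialFun A '' {m | m.card ≤ d})

lemma monomialFun_zero : monomialFun A 0 = 1 := by
  funext x; simp [monomialFun]

lemma monomialFun_add (m₁ m₂ : Multiset ι) :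
    monomialFun A (m₁ + m₂) = monomialFun A m₁ * monomialFun A m₂ := by
  funext x; simp [monomialFun]

lemma polynomialFun_mono : Monotone (polynomialFun A) :=
  fun _ _ h => Submodule.span_mono (Set.image_mono fun _ hm => le_trans hm h)

lemma polynomialFun_mul_le (a b : ℕ) :
    polynomialFun A a * polynomialFun A b ≤ polynomialFun A (a + b) := by
  rw [polynomialFun, polynomialFun, Submodule.span_mul_span, Submodule.span_le]
  rintro _ ⟨_, ⟨m₁, hm₁, rfl⟩, _, ⟨m₂, hm₂, rfl⟩, rfl⟩
  show monomialFun A m₁ * monomialFun A m₂ ∈ _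
  rw [← monomialFun_add]
  exact Submodule.subset_span ⟨m₁ + m₂, by simpa using add_le_add hm₁ hm₂, rfl⟩

lemma one_mem_polynomialFun_zero : (1 : A → ℝ) ∈ polynomialFun A 0 :=
  Submodule.subset_span ⟨0, by simp, monomialFun_zero A⟩

lemma inner_sub_mem_polynomialFun_one [Fintype ι] (p : EuclideanSpace ℝ ι) (c : ℝ) :
    (fun x : A => ⟪(x : EuclideanSpace ℝ ι), p⟫ - c) ∈ polynomialFun A 1 := by
  have hlin :
      (fun x : A => ⟪(x : EuclideanSpace ℝ ι), p⟫) = ∑ j, p j • monomialFun A {j} := by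
    funext x
    simp [monomialFun, PiLp.inner_apply]
  have hconst : (fun x : A => ⟪(x : EuclideanSpace ℝ ι), p⟫ - c)
      = (fun x : A => ⟪(x : EuclideanSpace ℝ ι), p⟫) - c • 1 := by
    funext x; simp
  rw [hconst, hlin]
  refine Submodule.sub_mem _ (Submodule.sum_mem _ fun j _ => ?_) ?_
  · exact Submodule.smul_mem _ _ (Submodule.subset_span ⟨{j}, by simp, rfl⟩)
  · exact Submodule.smul_mem _ _ (polynomialFun_mono A zero_le_one (one_mem_polynomialFun_zero A))

lemma prod_inner_sub_mem_polynomialFun [Fintype ι] (p : EuclideanSpace ℝ ι) (T : Finset ℝ) :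
    (fun x : A => ∏ c ∈ T, (⟪(x : EuclideanSpace ℝ ι), p⟫ - c)) ∈
      polynomialFun A T.card := by
  classical
  induction T using Finset.induction_on with
  | empty =>
    simp only [Finset.prod_empty, Finset.card_empty]
    exact one_mem_polynomialFun_zero A
  | insert c T hc ih =>
    simp_rw [Finset.prod_insert hc, Finset.card_insert_of_notMem hc, add_comm T.card]
    exact polynomialFun_mul_le A 1 T.card
      (Submodule.mul_mem_mul (inner_sub_mem_polynomialFun_one A p c) ih)

lemma homogeneousFun_le_add_two [Fintype ι] (hA : A ⊆ sphere 0 1) (d : ℕ) :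
    homogeneousFun A d ≤ homogeneousFun A (d + 2) := by
  refine Submodule.span_le.2 ?_
  rintro _ ⟨m, rfl, rfl⟩
  have hsq : monomialFun A m = ∑ j, monomialFun A (j ::ₘ j ::ₘ m) := by
    funext x
    have hx : ∑ j, (x : EuclideanSpace ℝ ι) j * (x : EuclideanSpace ℝ ι) j = 1 := by
      have h := real_inner_self_eq_norm_sq (x : EuclideanSpace ℝ ι)
      rw [mem_sphere_zero_iff_norm.1 (hA x.2), one_pow, PiLp.inner_apply] at h
      simpa [sq] using h
    simp [monomialFun, ← mul_assoc, ← Finset.sum_mul, hx]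
  rw [hsq]
  exact Submodule.sum_mem _ fun j _ =>
    Submodule.subset_span ⟨j ::ₘ j ::ₘ m, by simp, rfl⟩

lemma homogeneousFun_le_add_two_mul [Fintype ι] (hA : A ⊆ sphere 0 1) (d k : ℕ) :
    homogeneousFun A d ≤ homogeneousFun A (d + 2 * k) := by
  induction k with
  | zero => rfl
  | succ k ih => exact ih.trans (homogeneousFun_le_add_two A hA _)

lemma polynomialFun_le_sup [Fintype ι] (hA : A ⊆ sphere 0 1) (s : ℕ) :
    polynomialFun A s ≤ homogeneousFun A s ⊔ homogeneousFun A (s - 1) := by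
  refine Submodule.span_le.2 ?_
  rintro _ ⟨m, hm : m.card ≤ s, rfl⟩
  have hmem : monomialFun A m ∈ homogeneousFun A m.card := Submodule.subset_span ⟨m, rfl, rfl⟩
  rcases Nat.even_or_odd (s - m.card) with ⟨k, hk⟩ | ⟨k, hk⟩
  · have hs : s = m.card + 2 * k := by omega
    exact Submodule.mem_sup_left (hs ▸ homogeneousFun_le_add_two_mul A hA _ k hmem)
  · have hs : s - 1 = m.card + 2 * k := by omega
    exact Submodule.mem_sup_right (hs ▸ homogeneousFun_le_add_two_mul A hA _ k hmem)

lemma finrank_homogeneousFun_le [Fintype ι] (d : ℕ) :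
    finrank ℝ (homogeneousFun A d) ≤ (Fintype.card ι + d - 1).choose d := by
  classical
  have hrange :
      monomialFun A '' {m | m.card = d} = Set.range fun m : Sym ι d => monomialFun A m :=
    Set.ext fun _ =>
      ⟨fun ⟨m, hm, h⟩ => ⟨⟨m, hm⟩, h⟩, fun ⟨m, h⟩ => ⟨m, m.2, h⟩⟩
  rw [homogeneousFun, hrange, ← Sym.card_sym_eq_choose]
  exact finrank_range_le_card _

end SphericalCode

lemma linearIndependent_of_apply_self_ne_zero {K X : Type*} [DivisionRing K] [Finite X]
    (f : X → X → K) (hdiag : ∀ x, f x x ≠ 0) (hoff : ∀ x y, x ≠ y → f x y = 0) :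
    LinearIndependent K f := by
  classical
  have : Fintype X := Fintype.ofFinite X
  have hf : f = fun x => Units.mk0 (f x x) (hdiag x) • Pi.basisFun K X x := by
    funext x y
    by_cases h : x = y
    · subst h; simp
    · simp [hoff x y h, Ne.symm h]
  rw [hf]
  exact (Pi.basisFun K X).linearIndependent.units_smul _

open SphericalCode in
theorem card_le_of_inner_mem_range {ι : Type*} [Fintype ι] {s : ℕ}
    (S : Finset (EuclideanSpace ℝ ι)) (hS : ↑S ⊆ sphere (0 : EuclideanSpace ℝ ι) 1)
    (t : Fin s → ℝ) (hdist : ∀ p ∈ S, ∀ q ∈ S, p ≠ q → ⟪p, q⟫ ∈ Set.range t) :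
    S.card ≤ (Fintype.card ι + s - 1).choose s + (Fintype.card ι + s - 2).choose (s - 1) := by
  classical
  set A : Set (EuclideanSpace ℝ ι) := ↑S
  have hunit (p : A) : ‖(p : EuclideanSpace ℝ ι)‖ = 1 := mem_sphere_zero_iff_norm.1 (hS p.2)
  set T := (Finset.univ.image t).erase 1
  let f (p : A) : A → ℝ := fun x => ∏ c ∈ T, (⟪(x : EuclideanSpace ℝ ι), p⟫ - c)
  have hdiag (p : A) : f p p ≠ 0 := by
    refine Finset.prod_ne_zero_iff.2 fun c hc => sub_ne_zero.2 fun h => Finset.ne_of_mem_erase hc ?_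
    rw [← h, real_inner_self_eq_norm_sq, hunit, one_pow]
  have hoff (p q : A) (hpq : p ≠ q) : f p q = 0 := by
    have hne : (q : EuclideanSpace ℝ ι) ≠ p := fun h => hpq (Subtype.ext h.symm)
    obtain ⟨i, hi⟩ := hdist q q.2 p p.2 hne
    refine Finset.prod_eq_zero (i := ⟪(q : EuclideanSpace ℝ ι), p⟫) ?_ (sub_self _)
    refine Finset.mem_erase.2
      ⟨fun h => hne ?_, Finset.mem_image.2 ⟨i, Finset.mem_univ _, hi⟩⟩
    exact (inner_eq_one_iff_of_norm_eq_one (hunit q) (hunit p)).1 h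
  have hT : T.card ≤ s :=
    (Finset.card_erase_le).trans (Finset.card_image_le.trans (by simp))
  have hmem (p : A) : f p ∈ homogeneousFun A s ⊔ homogeneousFun A (s - 1) :=
    polynomialFun_le_sup A hS s (polynomialFun_mono A hT (prod_inner_sub_mem_polynomialFun A _ T))
  set V := homogeneousFun A s ⊔ homogeneousFun A (s - 1)
  have hindep : LinearIndependent ℝ fun p => (⟨f p, hmem p⟩ : V) :=
    LinearIndependent.of_comp V.subtype
      (linearIndependent_of_apply_self_ne_zero f hdiag hoff)
  -- truncated subtraction: for `s = 0` both sides are a `choose _ 0`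
  have hchoose : (Fintype.card ι + (s - 1) - 1).choose (s - 1)
      = (Fintype.card ι + s - 2).choose (s - 1) := by
    rcases s with _ | s
    · simp
    · congr 1
  calc S.card = Fintype.card A := by simp [A]
    _ ≤ finrank ℝ V := hindep.fintype_card_le_finrank
    _ ≤ finrank ℝ (homogeneousFun A s) + finrank ℝ (homogeneousFun A (s - 1)) :=
      Submodule.finrank_add_le_finrank_add_finrank _ _
    _ ≤ _ := by
      rw [← hchoose]
      exact add_le_add (finrank_homogeneousFun_le A s) (finrank_homogeneousFun_le A (s - 1))

lemma choose_add_choose_le_div_mul_choose (n s : ℕ) (hs : 2 ≤ s) :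
    ((n + s - 1).choose s + (n + s - 2).choose (s - 1) : ℝ)
      ≤ (n + 2 * s - 2 : ℝ) / s * (n + s - 1).choose (s - 1) := by
  obtain ⟨k, rfl⟩ : ∃ k, s = k + 1 := ⟨s - 1, by omega⟩
  have hpascal : ((n + k).choose (k + 1) * (k + 1) : ℝ) = (n + k).choose k * n := by
    exact_mod_cast (Nat.choose_succ_right_eq (n + k) k).trans (by rw [Nat.add_sub_cancel_right])
  have hmono : ((n + k - 1).choose k : ℝ) ≤ (n + k).choose k := by
    exact_mod_cast Nat.choose_le_choose k (Nat.sub_le _ 1)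
  have hk : (1 : ℝ) ≤ k := by exact_mod_cast (by omega : 1 ≤ k)
  simp only [Nat.add_sub_cancel, show n + (k + 1) - 1 = n + k by omega,
    show n + (k + 1) - 2 = n + k - 1 by omega]
  rw [div_mul_eq_mul_div, le_div_iff₀ (by positivity)]
  push_cast
  nlinarith [mul_le_mul_of_nonneg_left hmono (by positivity : (0 : ℝ) ≤ k + 1),
    mul_nonneg (sub_nonneg.2 hk) (Nat.cast_nonneg ((n + k).choose k) : (0 : ℝ) ≤ _)]

theorem barg_musin_bound_general (n s : ℕ) (hs : 0 < s) (hseven : Even s)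
    (t : Fin s → ℝ)
    (S : Finset (EuclideanSpace ℝ (Fin n)))
    (hunit : ∀ p ∈ S, ‖p‖ = 1)
    (hdist : ∀ p ∈ S, ∀ q ∈ S, p ≠ q → ⟪p, q⟫ ∈ Set.range t) :
    (S.card : ℝ) ≤
      ((n + (s - 2) - 1).choose (s - 2) + (n + (s - 2) - 2).choose (s - 2 - 1) : ℝ)
        + ((n + 2 * s - 2 : ℝ) / s) * ((n + s - 1).choose (s - 1) : ℝ) := by
  have hs2 : 2 ≤ s := by obtain ⟨k, rfl⟩ := hseven; omega
  have hS : ↑S ⊆ sphere (0 : EuclideanSpace ℝ (Fin n)) 1 :=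
    fun p hp => mem_sphere_zero_iff_norm.2 (hunit p hp)
  have hcard := card_le_of_inner_mem_range S hS t hdist
  rw [Fintype.card_fin] at hcard
  calc (S.card : ℝ) ≤ (n + s - 1).choose s + (n + s - 2).choose (s - 1) := by
        exact_mod_cast hcard
    _ ≤ (n + 2 * s - 2 : ℝ) / s * (n + s - 1).choose (s - 1) :=
      choose_add_choose_le_div_mul_choose n s hs2
    _ ≤ _ := le_add_of_nonneg_left (by positivity)

/-- Barg–Musin bound: if `S ⊆ Sⁿ⁻¹` has all pairwise inner products among
`t₁, …, t_s` with `s` even and `t₁ + ⋯ + t_s ≥ 0`, then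
`|S| ≤ M(n, s-2) + ((n+2s-2)/s)·C(n+s-1, s-1)` where
`M(n,s) = C(n+s-1, s) + C(n+s-2, s-1)`. -/
theorem barg_musin_bound (n s : ℕ) (hn : 1 ≤ n) (hs : 0 < s) (hseven : Even s)
    (t : Fin s → ℝ) (hsum : 0 ≤ ∑ i, t i)
    (S : Finset (EuclideanSpace ℝ (Fin n)))
    (hunit : ∀ p ∈ S, ‖p‖ = 1)
    (hdist : ∀ p ∈ S, ∀ q ∈ S, p ≠ q → ⟪p, q⟫ ∈ Set.range t) :
    (S.card : ℝ) ≤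
      ((n + (s - 2) - 1).choose (s - 2) + (n + (s - 2) - 2).choose (s - 2 - 1) : ℝ)
        + ((n + 2 * s - 2 : ℝ) / s) * ((n + s - 1).choose (s - 1) : ℝ) :=
  barg_musin_bound_general n s hs hseven t S hunit hdist
end

section
/- Let n ≥ 1 be a positive integer. If F is a finite set of unit vectors in ℝⁿ such that the set of inner products {⟨p,q⟩ : p, q ∈ F, p ≠ q} has at most 2 elements, then |F| ≤ n(n+3)/2. -/
open RealInnerProductSpace

/-! Polynomial method. Let `a, b` be the two inner products. For `p ∈ F` the function
`fₚ(x) = (⟪p, x⟫ - a)(⟪p, x⟫ - b)` vanishes at every point of `F` other than `p` but not at `p`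
(as `a, b ≠ 1`), so the restrictions of the `fₚ` to `F` are linearly independent. On the unit
sphere the constant `1 = ∑ xᵢ²` is quadratic, so every `fₚ` lies in the span of the `n(n+1)/2`
monomials `xᵢxⱼ` and the `n` coordinates `xᵢ`; hence `|F| ≤ n(n+1)/2 + n = n(n+3)/2`. -/

open Submodule Set in
theorem LinearIndependent.fintype_card_le_of_forall_mem_span {R M ι κ : Type*} [Ring R]
    [StrongRankCondition R] [AddCommGroup M] [Module R M] [Fintype ι] [Fintype κ] {v : ι → M}
    (hv : LinearIndependent R v) {g : κ → M} (h : ∀ i, v i ∈ span R (range g)) :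
    Fintype.card ι ≤ Fintype.card κ := by
  classical
  exact (linearIndependent_le_span_aux' v hv _ (range_subset_iff.2 h)).trans
    (Fintype.card_range_le g)

theorem linearIndependent_of_apply_self_ne_zero_s2 {ι K : Type*} [Field K] {v : ι → ι → K}
    (hdiag : ∀ i, v i i ≠ 0) (hoff : ∀ i j, i ≠ j → v i j = 0) : LinearIndependent K v := by
  rw [linearIndependent_iff']
  intro s c hc i hi
  have hci : ∑ j ∈ s, c j * v j i = 0 := by simpa using congrFun hc i
  rw [Finset.sum_eq_single_of_mem i hi fun j _ hji => by rw [hoff j i hji, mul_zero]] at hci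
  exact (mul_eq_zero.mp hci).resolve_right (hdiag i)

theorem Set.Finite.exists_subset_pair_of_ncard_le_two {α : Type*} [Nontrivial α] {S : Set α}
    (hS : S.Finite) (h : S.ncard ≤ 2) (x : α) (hx : x ∉ S) :
    ∃ a b, a ≠ x ∧ b ≠ x ∧ S ⊆ {a, b} := by
  interval_cases hcard : S.ncard
  · obtain ⟨y, hy⟩ := exists_ne x
    exact ⟨y, y, hy, hy, by simp [(Set.ncard_eq_zero hS).mp hcard]⟩
  · obtain ⟨a, rfl⟩ := Set.ncard_eq_one.mp hcard
    exact ⟨a, a, fun h => hx (h ▸ rfl), fun h => hx (h ▸ rfl), by simp⟩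
  · obtain ⟨a, b, -, rfl⟩ := Set.ncard_eq_two.mp hcard
    exact ⟨a, b, fun h => hx (h ▸ by simp), fun h => hx (h ▸ by simp), subset_rfl⟩

namespace EuclideanSpace

variable {ι : Type*}

theorem real_inner_eq_sum [Fintype ι] (x y : EuclideanSpace ℝ ι) : ⟪x, y⟫ = ∑ i, x i * y i := by
  simp [PiLp.inner_apply, mul_comm]

def quadraticMonomial (F : Finset (EuclideanSpace ℝ ι)) : Sym2 ι ⊕ ι → F → ℝ
  | .inl s => fun q => Sym2.lift ⟨fun i j => q.1 i * q.1 j, fun _ _ => mul_comm _ _⟩ s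
  | .inr i => fun q => q.1 i

variable {F : Finset (EuclideanSpace ℝ ι)}

open Submodule

theorem mul_apply_mem_span_quadraticMonomial (i j : ι) :
    (fun q : F => q.1 i * q.1 j) ∈ span ℝ (Set.range (quadraticMonomial F)) :=
  subset_span ⟨.inl s(i, j), rfl⟩

theorem apply_mem_span_quadraticMonomial (i : ι) :
    (fun q : F => q.1 i) ∈ span ℝ (Set.range (quadraticMonomial F)) :=
  subset_span ⟨.inr i, rfl⟩

variable [Fintype ι]

theorem inner_mem_span_quadraticMonomial (p : EuclideanSpace ℝ ι) :
    (fun q : F => ⟪p, q.1⟫) ∈ span ℝ (Set.range (quadraticMonomial F)) := by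
  have : (fun q : F => ⟪p, q.1⟫) = ∑ i, p i • fun q : F => q.1 i := by
    ext q; simp [real_inner_eq_sum]
  rw [this]
  exact sum_mem fun i _ => smul_mem _ _ (apply_mem_span_quadraticMonomial i)

theorem inner_sq_mem_span_quadraticMonomial (p : EuclideanSpace ℝ ι) :
    (fun q : F => ⟪p, q.1⟫ ^ 2) ∈ span ℝ (Set.range (quadraticMonomial F)) := by
  have : (fun q : F => ⟪p, q.1⟫ ^ 2) = ∑ i, ∑ j, (p i * p j) • fun q : F => q.1 i * q.1 j := by
    ext q
    simp only [real_inner_eq_sum, sq, Finset.sum_mul_sum, Finset.sum_apply, Pi.smul_apply,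
      smul_eq_mul]
    exact Finset.sum_congr rfl fun i _ => Finset.sum_congr rfl fun j _ => by ring
  rw [this]
  exact sum_mem fun i _ => sum_mem fun j _ =>
    smul_mem _ _ (mul_apply_mem_span_quadraticMonomial i j)

theorem one_mem_span_quadraticMonomial (hF : ∀ p ∈ F, ‖p‖ = 1) :
    (1 : F → ℝ) ∈ span ℝ (Set.range (quadraticMonomial F)) := by
  have : (1 : F → ℝ) = ∑ i, fun q : F => q.1 i * q.1 i := by
    ext q
    simp [← real_inner_eq_sum, hF q.1 q.2]
  rw [this]
  exact sum_mem fun i _ => mul_apply_mem_span_quadraticMonomial i i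

theorem annihilator_mem_span_quadraticMonomial (hF : ∀ p ∈ F, ‖p‖ = 1)
    (p : EuclideanSpace ℝ ι) (a b : ℝ) :
    (fun q : F => (⟪p, q.1⟫ - a) * (⟪p, q.1⟫ - b)) ∈
      span ℝ (Set.range (quadraticMonomial F)) := by
  have : (fun q : F => (⟪p, q.1⟫ - a) * (⟪p, q.1⟫ - b)) =
      (fun q : F => ⟪p, q.1⟫ ^ 2) - (a + b) • (fun q : F => ⟪p, q.1⟫) + (a * b) • 1 := by
    ext q; simp only [Pi.add_apply, Pi.sub_apply, Pi.smul_apply, Pi.one_apply, smul_eq_mul]; ring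
  rw [this]
  exact add_mem (sub_mem (inner_sq_mem_span_quadraticMonomial p)
    (smul_mem _ _ (inner_mem_span_quadraticMonomial p)))
    (smul_mem _ _ (one_mem_span_quadraticMonomial hF))

theorem card_le_of_inner_eq_or_eq (hF : ∀ p ∈ F, ‖p‖ = 1) {a b : ℝ} (ha : a ≠ 1) (hb : b ≠ 1)
    (hab : ∀ p ∈ F, ∀ q ∈ F, p ≠ q → ⟪p, q⟫ = a ∨ ⟪p, q⟫ = b) :
    F.card ≤ Fintype.card (Sym2 ι ⊕ ι) := by
  set v : F → F → ℝ := fun p q => (⟪p.1, q.1⟫ - a) * (⟪p.1, q.1⟫ - b)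
  have hdiag (p : F) : v p p ≠ 0 := by
    have : ⟪p.1, p.1⟫ = 1 := by rw [real_inner_self_eq_norm_sq, hF p.1 p.2, one_pow]
    simp only [v, this]
    exact mul_ne_zero (sub_ne_zero.mpr ha.symm) (sub_ne_zero.mpr hb.symm)
  have hoff (p q : F) (hpq : p ≠ q) : v p q = 0 := by
    rcases hab p.1 p.2 q.1 q.2 (Subtype.coe_ne_coe.mpr hpq) with h | h <;> simp [v, h]
  have hv : LinearIndependent ℝ v := linearIndependent_of_apply_self_ne_zero_s2 hdiag hoff
  simpa using hv.fintype_card_le_of_forall_mem_span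
    fun p => annihilator_mem_span_quadraticMonomial hF p.1 a b

end EuclideanSpace

theorem Fintype.card_sym2_fin_sum_fin (n : ℕ) :
    Fintype.card (Sym2 (Fin n) ⊕ Fin n) = n * (n + 3) / 2 := by
  rw [Fintype.card_sum, Sym2.card, Fintype.card_fin, Nat.choose_two_right, Nat.add_sub_cancel,
    show n * (n + 3) = (n + 1) * n + n * 2 by ring, Nat.add_mul_div_right _ _ two_pos]

theorem two_distance_set_bound_general (n : ℕ)
    (F : Finset (EuclideanSpace ℝ (Fin n)))
    (hunit : ∀ p ∈ F, ‖p‖ = 1)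
    (hdist : {r : ℝ | ∃ p ∈ F, ∃ q ∈ F, p ≠ q ∧ ⟪p, q⟫ = r}.ncard ≤ 2) :
    F.card ≤ n * (n + 3) / 2 := by
  set S := {r : ℝ | ∃ p ∈ F, ∃ q ∈ F, p ≠ q ∧ ⟪p, q⟫ = r}
  have hfin : S.Finite :=
    (F.finite_toSet.image2 (fun p q => ⟪p, q⟫) F.finite_toSet).subset
      (by rintro r ⟨p, hp, q, hq, -, rfl⟩; exact ⟨p, hp, q, hq, rfl⟩)
  have hone : 1 ∉ S := by
    rintro ⟨p, hp, q, hq, hpq, h⟩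
    exact hpq ((inner_eq_one_iff_of_norm_eq_one (hunit p hp) (hunit q hq)).mp h)
  obtain ⟨a, b, ha, hb, hab⟩ := hfin.exists_subset_pair_of_ncard_le_two hdist 1 hone
  rw [← Fintype.card_sym2_fin_sum_fin]
  exact EuclideanSpace.card_le_of_inner_eq_or_eq hunit ha hb
    fun p hp q hq hpq => hab ⟨p, hp, q, hq, hpq, rfl⟩

/-- A spherical two-distance set in `ℝⁿ` has at most `n(n+3)/2` points. -/
theorem two_distance_set_bound (n : ℕ) (hn : 1 ≤ n)
    (F : Finset (EuclideanSpace ℝ (Fin n)))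
    (hunit : ∀ p ∈ F, ‖p‖ = 1)
    (hdist : {r : ℝ | ∃ p ∈ F, ∃ q ∈ F, p ≠ q ∧ ⟪p, q⟫ = r}.ncard ≤ 2) :
    F.card ≤ n * (n + 3) / 2 :=
  two_distance_set_bound_general n F hunit hdist
end

section
/- Let t > 0 be a positive integer and set n = 3·2^{2t-1} − 1. Then there exists a set S of unit vectors in ℝⁿ with |S| = (2/9)(n+1)² and a real number α such that ⟨p,q⟩ ∈ {α, -α} for all distinct p, q ∈ S. -/
open RealInnerProductSpace

/-!
Let `F = 𝔽_{2^m}` with `m = 2t - 1` and `V = F × 𝔽₂`, so `|V| = 2^{2t}`. As `m` is odd, the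
quadratic forms `Q_s(x, e) = Σ_{j=1}^{t-1} Tr((s x)^{2^j+1}) + e Tr(s x)`, `s ∈ F`, form a Kerdock set:
`Q_s - Q_{s'}` is nondegenerate for `s ≠ s'`. Hence the `±1` vectors `v ↦ (-1)^{Q_s(v) + ⟨b, v⟩}`,
`b ∈ V`, are an orthogonal basis of `ℝ^V` for each fixed `s`, while for `s ≠ s'` their inner
products are Gauss sums of absolute value `2^t`. Appending `2^{t/2} e_s ∈ ℝ^F` makes all mutual
inner products `±2^t`, which gives `2^m · 2^{2t} = (2/9)(3 · 2^m)²` equiangular lines in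
`ℝ^V × ℝ^F`. All of them have coordinate `1` at `v = 0`, so they lie in a hyperplane.
-/

open Finset Module

namespace DeCaen

noncomputable section

def IsEquiangular {E : Type*} [NormedAddCommGroup E] [InnerProductSpace ℝ E] (S : Finset E) :
    Prop :=
  (∀ p ∈ S, ‖p‖ = 1) ∧ ∃ α : ℝ, ∀ p ∈ S, ∀ q ∈ S, p ≠ q → ⟪p, q⟫ = α ∨ ⟪p, q⟫ = -α

section Equiangular

variable {ι E : Type*} [NormedAddCommGroup E] [InnerProductSpace ℝ E]

theorem injective_of_abs_inner_eq {y : ι → E} {α : ℝ} (hα : α < 1) (hy : ∀ i, ‖y i‖ = 1)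
    (hyy : ∀ i j, i ≠ j → |⟪y i, y j⟫| = α) : Function.Injective y := by
  intro i j hij
  by_contra hne
  have := hyy i j hne
  rw [hij, real_inner_self_eq_norm_sq, hy, one_pow, abs_one] at this
  exact hα.ne' this

theorem exists_isEquiangular_of_family [Fintype ι] [FiniteDimensional ℝ E] {n : ℕ}
    (hn : finrank ℝ E = n) (y : ι → E) {α : ℝ} (hα : α < 1) (hy : ∀ i, ‖y i‖ = 1)
    (hyy : ∀ i j, i ≠ j → |⟪y i, y j⟫| = α) :
    ∃ S : Finset (EuclideanSpace ℝ (Fin n)), IsEquiangular S ∧ S.card = Fintype.card ι := by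
  classical
  subst hn
  set L := (stdOrthonormalBasis ℝ E).repr
  have hinj : Function.Injective (L ∘ y) := L.injective.comp (injective_of_abs_inner_eq hα hy hyy)
  refine ⟨univ.image (L ∘ y), ⟨?_, α, ?_⟩, by rw [card_image_of_injective _ hinj, card_univ]⟩
  · simp [L.norm_map, hy]
  · simp only [mem_image, mem_univ, true_and, Function.comp_apply]
    rintro _ ⟨i, rfl⟩ _ ⟨j, rfl⟩ hij
    rw [L.inner_map_map]
    exact eq_or_eq_neg_of_abs_eq (hyy i j fun h => hij (h ▸ rfl))

end Equiangular

section Stacking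

variable {ι E : Type*} [Fintype ι] [NormedAddCommGroup E] [InnerProductSpace ℝ E]

def stack [DecidableEq ι] (r : ℝ) (s : ι) (x : E) : WithLp 2 (E × EuclideanSpace ℝ ι) :=
  WithLp.toLp 2 (x, EuclideanSpace.single s √r)

def stackNormal (r : ℝ) (e : E) : WithLp 2 (E × EuclideanSpace ℝ ι) :=
  WithLp.toLp 2 (e, WithLp.toLp 2 fun _ => -(√r)⁻¹)

theorem inner_stack [DecidableEq ι] {r : ℝ} (hr : 0 ≤ r) (s s' : ι) (x x' : E) :
    ⟪stack r s x, stack r s' x'⟫ = ⟪x, x'⟫ + if s = s' then r else 0 := by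
  simp [stack, WithLp.prod_inner_apply, EuclideanSpace.inner_single_left, hr]

theorem inner_stackNormal_stack [DecidableEq ι] {r : ℝ} (hr : 0 < r) (e x : E) (s : ι) :
    ⟪stackNormal r e, stack r s x⟫ = ⟪e, x⟫ - 1 := by
  simp [stack, stackNormal, WithLp.prod_inner_apply, EuclideanSpace.inner_single_right,
    mul_inv_cancel₀ (Real.sqrt_pos.2 hr).ne', sub_eq_add_neg]

theorem finrank_orthogonal_stackNormal [FiniteDimensional ℝ E] [Nonempty ι] {r : ℝ} (hr : 0 < r)
    (e : E) : finrank ℝ (ℝ ∙ stackNormal (ι := ι) r e)ᗮ + 1 = finrank ℝ E + Fintype.card ι := by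
  have hne : stackNormal (ι := ι) r e ≠ 0 := fun h => by
    have := congrArg (fun z : WithLp 2 (E × EuclideanSpace ℝ ι) => z.ofLp.2 (Classical.arbitrary ι))
      h
    simp [stackNormal, (Real.sqrt_pos.2 hr).ne'] at this
  have h := Submodule.finrank_add_finrank_orthogonal (ℝ ∙ stackNormal (ι := ι) r e)
  rw [finrank_span_singleton hne, (WithLp.linearEquiv 2 ℝ (E × EuclideanSpace ℝ ι)).finrank_eq,
    finrank_prod, finrank_euclideanSpace] at h
  omega

/-- The lines are spanned by the vectors `stack r s (x s b)`, which all lie in the hyperplane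
orthogonal to `stackNormal r e`. -/
theorem exists_isEquiangular_of_unbiased [DecidableEq ι] [Nonempty ι] [FiniteDimensional ℝ E]
    {β : Type*} [Fintype β] {n : ℕ} (hn : finrank ℝ E + Fintype.card ι = n + 1) {N r : ℝ}
    (hN : 0 < N) (hr : 0 < r) (x : ι → β → E) (e : E) (he : ∀ s b, ⟪e, x s b⟫ = 1)
    (hself : ∀ s b, ⟪x s b, x s b⟫ = N) (horth : ∀ s b b', b ≠ b' → ⟪x s b, x s b'⟫ = 0)
    (hunb : ∀ s s' b b', s ≠ s' → |⟪x s b, x s' b'⟫| = r) :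
    ∃ S : Finset (EuclideanSpace ℝ (Fin n)), IsEquiangular S ∧
      S.card = Fintype.card ι * Fintype.card β := by
  have hNr : 0 < N + r := by linarith
  have hmem : ∀ s b, (√(N + r))⁻¹ • stack r s (x s b) ∈ (ℝ ∙ stackNormal (ι := ι) r e)ᗮ := by
    intro s b
    rw [Submodule.mem_orthogonal_singleton_iff_inner_right, real_inner_smul_right,
      inner_stackNormal_stack hr, he, sub_self, mul_zero]
  let y : ι × β → (ℝ ∙ stackNormal (ι := ι) r e)ᗮ := fun i => ⟨_, hmem i.1 i.2⟩
  have hy : ∀ i j, ⟪y i, y j⟫ = ⟪stack r i.1 (x i.1 i.2), stack r j.1 (x j.1 j.2)⟫ / (N + r) := by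
    intro i j
    simp only [y, Submodule.coe_inner, real_inner_smul_left, real_inner_smul_right]
    rw [← mul_assoc, ← mul_inv, Real.mul_self_sqrt hNr.le, inv_mul_eq_div]
  have hunit : ∀ i, ‖y i‖ = 1 := by
    intro i
    rw [norm_eq_sqrt_real_inner, hy, inner_stack hr.le, hself, if_pos rfl, div_self hNr.ne',
      Real.sqrt_one]
  have hangle : ∀ i j, i ≠ j → |⟪y i, y j⟫| = r / (N + r) := by
    rintro ⟨s, b⟩ ⟨s', b'⟩ hne
    rw [hy, inner_stack hr.le, abs_div, abs_of_pos hNr]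
    by_cases hs : s = s'
    · subst hs
      rw [horth s b b' fun h => hne (h ▸ rfl), if_pos rfl, zero_add, abs_of_pos hr]
    · rw [if_neg hs, add_zero, hunb s s' b b' hs]
  obtain ⟨S, hS, hcard⟩ := exists_isEquiangular_of_family (n := n)
    (by have := finrank_orthogonal_stackNormal (ι := ι) hr e; omega) y
    ((div_lt_one hNr).2 (by linarith)) hunit hangle
  exact ⟨S, hS, by rw [hcard, Fintype.card_prod]⟩

end Stacking

def signChar : AddChar (ZMod 2) ℝ :=
  AddChar.zmodChar 2 (by norm_num : (-1 : ℝ) ^ 2 = 1)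

theorem signChar_one : signChar 1 = -1 := by
  simp [signChar, AddChar.zmodChar_apply, ZMod.val_one]

section CharacterSums

variable {M : Type*} [AddCommGroup M] [Fintype M]

theorem sum_signChar_eq_zero (φ : M → ZMod 2) (hφ : ∀ u v, φ (u + v) = φ u + φ v) {z : M}
    (hz : φ z ≠ 0) : ∑ v, signChar (φ v) = 0 := by
  refine AddChar.sum_eq_zero_of_ne_one (ψ := signChar.compAddMonoidHom (.mk' φ hφ)) fun h => ?_
  have hz1 : φ z = 1 := (by decide : ∀ a : ZMod 2, a ≠ 0 → a = 1) _ hz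
  have := DFunLike.congr_fun h z
  norm_num [hz1, signChar_one] at this

theorem sq_sum_signChar_eq_card (f : M → ZMod 2) (B : M → M → ZMod 2)
    (hf : ∀ u w, f (u + w) = f u + f w + B u w) (hB : ∀ u u' w, B (u + u') w = B u w + B u' w)
    (hrad : ∀ w, (∀ u, B u w = 0) → w = 0) :
    (∑ v, signChar (f v)) ^ 2 = Fintype.card M := by
  have hdiff : ∀ v w, signChar (f v) * signChar (f (v + w)) = signChar (f w + B v w) := by
    intro v w
    rw [← AddChar.map_add_eq_mul, hf, ← add_assoc, ← add_assoc, CharTwo.add_self_eq_zero, zero_add]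
  have hoff : ∀ w ≠ 0, ∑ v, signChar (f w + B v w) = 0 := by
    intro w hw
    obtain ⟨u, hu⟩ : ∃ u, B u w ≠ 0 := by
      by_contra! h
      exact hw (hrad w h)
    simp only [AddChar.map_add_eq_mul, ← mul_sum]
    rw [sum_signChar_eq_zero (B · w) (hB · · w) hu, mul_zero]
  have hzero : ∀ v, f 0 + B v 0 = 0 := by
    intro v
    simpa [add_assoc] using hf v 0
  calc (∑ v, signChar (f v)) ^ 2 = ∑ v, ∑ w, signChar (f v) * signChar (f (v + w)) := by
        rw [sq, sum_mul_sum]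
        exact sum_congr rfl fun v _ =>
          (Equiv.sum_comp (Equiv.addLeft v) fun u => signChar (f v) * signChar (f u)).symm
    _ = ∑ w, ∑ v, signChar (f w + B v w) := by simp only [hdiff]; exact sum_comm
    _ = ∑ v, signChar (f 0 + B v 0) := Fintype.sum_eq_single 0 hoff
    _ = Fintype.card M := by simp [hzero]

end CharacterSums

section Kerdock

variable {F : Type*} [Field F] [Algebra (ZMod 2) F]

local notation "tr" => Algebra.trace (ZMod 2) F

theorem charP_two_of_algebra : CharP F 2 :=
  charP_of_injective_algebraMap (algebraMap (ZMod 2) F).injective 2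

attribute [local instance] charP_two_of_algebra

theorem trace_algebraMap_mul (e : ZMod 2) (x : F) :
    tr (algebraMap (ZMod 2) F e * x) = e * tr x := by
  rw [← Algebra.smul_def, map_smul, smul_eq_mul]

theorem trace_one_of_odd (h : Odd (finrank (ZMod 2) F)) : tr 1 = 1 := by
  rw [← map_one (algebraMap (ZMod 2) F), Algebra.trace_algebraMap, nsmul_eq_mul, mul_one]
  exact (ZMod.natCast_eq_one_iff_odd).2 h

def traceQuadratic (x : F) : ZMod 2 :=
  ∑ j ∈ Icc 1 (finrank (ZMod 2) F / 2), tr (x ^ (2 ^ j + 1))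

def pairing (b v : F × ZMod 2) : ZMod 2 := tr (b.1 * v.1) + b.2 * v.2

theorem pairing_comm (b v : F × ZMod 2) : pairing b v = pairing v b := by
  simp only [pairing, mul_comm]

theorem pairing_add_left (b b' v : F × ZMod 2) :
    pairing (b + b') v = pairing b v + pairing b' v := by
  simp only [pairing, Prod.fst_add, Prod.snd_add, add_mul, map_add]
  ring

theorem pairing_add_right (b v v' : F × ZMod 2) :
    pairing b (v + v') = pairing b v + pairing b v' := by
  rw [pairing_comm, pairing_add_left, pairing_comm v, pairing_comm v']

@[simp]
theorem pairing_zero_right (b : F × ZMod 2) : pairing b 0 = 0 := by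
  simp [pairing]

def kerdockForm (s : F) (v : F × ZMod 2) : ZMod 2 :=
  traceQuadratic (s * v.1) + v.2 * tr (s * v.1)

def kerdockPolar (s : F) (w : F × ZMod 2) : F × ZMod 2 :=
  (s ^ 2 * w.1 + algebraMap (ZMod 2) F (tr (s * w.1) + w.2) * s, tr (s * w.1))

@[simp]
theorem kerdockForm_zero (s : F) : kerdockForm s 0 = 0 := by
  simp [kerdockForm, traceQuadratic]

/-- The Kerdock property: `kerdockForm s - kerdockForm s'` is nondegenerate for `s ≠ s'`. -/
theorem eq_zero_of_kerdockPolar_eq (hodd : Odd (finrank (ZMod 2) F)) {s s' : F} (hss : s ≠ s')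
    {w : F × ZMod 2} (h : kerdockPolar s w = kerdockPolar s' w) : w = 0 := by
  obtain ⟨x, e⟩ := w
  simp only [kerdockPolar, Prod.mk.injEq] at h
  obtain ⟨hfst, htr⟩ := h
  rw [htr] at hfst
  have hsum : s + s' ≠ 0 := by rwa [← CharTwo.sub_eq_add, sub_ne_zero]
  have hlin : (s + s') * x = -algebraMap (ZMod 2) F (tr (s' * x) + e) := by
    have : (s - s') * ((s + s') * x + algebraMap (ZMod 2) F (tr (s' * x) + e)) = 0 := by
      linear_combination hfst
    linear_combination (mul_eq_zero.1 this).resolve_left (sub_ne_zero.2 hss)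
  have htr_sum : tr ((s + s') * x) = 0 := by
    rw [add_mul, map_add, htr, CharTwo.add_self_eq_zero]
  -- `(s + s') x` lies in `𝔽₂` and has trace `0`, whereas `Tr 1 = 1` in odd degree.
  rcases (by decide : ∀ a : ZMod 2, a = 0 ∨ a = 1) (tr (s' * x) + e) with he | he
  · rw [he, map_zero, neg_zero, mul_eq_zero, or_iff_right hsum] at hlin
    rw [hlin, mul_zero, map_zero, zero_add] at he
    rw [hlin, he, Prod.mk_zero_zero]
  · rw [hlin, he, map_one, map_neg, trace_one_of_odd hodd] at htr_sum
    exact absurd htr_sum (by decide)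

variable [Finite F]

theorem trace_pow_two_pow (x : F) (j : ℕ) : tr (x ^ 2 ^ j) = tr x := by
  have h := Algebra.trace_eq_of_algEquiv
    (FiniteField.frobeniusAlgEquivOfAlgebraic (ZMod 2) F ^ j) x
  rwa [AlgEquiv.coe_pow, FiniteField.coe_frobeniusAlgEquivOfAlgebraic_iterate, ZMod.card] at h

theorem pow_two_pow_finrank (x : F) : x ^ 2 ^ finrank (ZMod 2) F = x := by
  have := Fintype.ofFinite F
  have h : Fintype.card F = 2 ^ finrank (ZMod 2) F := by
    rw [card_eq_pow_finrank (K := ZMod 2), ZMod.card]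
  rw [← h, FiniteField.pow_card]

theorem sum_trace_pow_two_pow_mul (x y : F) :
    ∑ j ∈ range (finrank (ZMod 2) F), tr (x ^ 2 ^ j * y) = tr x * tr y := by
  have h := FiniteField.algebraMap_trace_eq_sum_pow (ZMod 2) F x
  rw [Nat.card_zmod] at h
  rw [← map_sum, ← sum_mul, ← h, trace_algebraMap_mul]

theorem trace_mul_pow_two_pow {j : ℕ} (hj : j ≤ finrank (ZMod 2) F) (x y : F) :
    tr (x * y ^ 2 ^ j) = tr (x ^ 2 ^ (finrank (ZMod 2) F - j) * y) := by
  rw [← trace_pow_two_pow _ (finrank (ZMod 2) F - j), mul_pow, ← pow_mul, ← pow_add,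
    Nat.add_sub_cancel' hj, pow_two_pow_finrank]

theorem exists_trace_mul_ne_zero {x : F} (hx : x ≠ 0) : ∃ y, tr (x * y) ≠ 0 := by
  by_contra! h
  exact hx ((traceForm_nondegenerate (ZMod 2) F).1 x h)

theorem sum_trace_cross {k : ℕ} (hk : finrank (ZMod 2) F = 2 * k + 1) (x y : F) :
    ∑ j ∈ Icc 1 k, (tr (x ^ 2 ^ j * y) + tr (x * y ^ 2 ^ j)) = tr x * tr y + tr (x * y) := by
  set m := finrank (ZMod 2) F
  have hreflect :
      ∑ j ∈ Icc 1 k, tr (x * y ^ 2 ^ j) = ∑ j ∈ Ico (k + 1) m, tr (x ^ 2 ^ j * y) := by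
    rw [sum_congr rfl fun j hj => trace_mul_pow_two_pow (by simp at hj; omega) x y,
      ← Ico_add_one_right_eq_Icc,
      sum_Ico_reflect (fun j => tr (x ^ 2 ^ j * y)) 1 (by omega : k + 1 ≤ m + 1)]
    rw [show m + 1 - (k + 1) = k + 1 by omega, Nat.add_sub_cancel]
  have hall := sum_trace_pow_two_pow_mul x y
  rw [range_eq_Ico, sum_eq_sum_Ico_succ_bot (by omega),
    ← sum_Ico_consecutive _ (by omega : 1 ≤ k + 1) (by omega : k + 1 ≤ m), pow_zero,
    pow_one] at hall
  rw [sum_add_distrib, hreflect, ← Ico_add_one_right_eq_Icc]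
  linear_combination hall - tr (x * y) * CharTwo.two_eq_zero (R := ZMod 2)

theorem traceQuadratic_add (hodd : Odd (finrank (ZMod 2) F)) (x y : F) :
    traceQuadratic (x + y) = traceQuadratic x + traceQuadratic y + (tr x * tr y + tr (x * y)) := by
  obtain ⟨k, hk⟩ := hodd
  have hexpand : ∀ j, (x + y) ^ (2 ^ j + 1)
      = x ^ (2 ^ j + 1) + y ^ (2 ^ j + 1) + (x ^ 2 ^ j * y + x * y ^ 2 ^ j) := fun j => by
    rw [pow_succ, pow_succ, pow_succ, add_pow_char_pow]
    ring
  simp only [traceQuadratic, hexpand, map_add, sum_add_distrib]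
  rw [show finrank (ZMod 2) F / 2 = k by omega, ← sum_trace_cross hk]
  simp only [sum_add_distrib]

theorem exists_pairing_ne_zero {b : F × ZMod 2} (hb : b ≠ 0) : ∃ v, pairing b v ≠ 0 := by
  by_cases h1 : b.1 = 0
  · refine ⟨(0, 1), ?_⟩
    have h2 : b.2 ≠ 0 := fun h2 => hb (Prod.ext h1 h2)
    simpa [pairing] using h2
  · obtain ⟨y, hy⟩ := exists_trace_mul_ne_zero h1
    exact ⟨(y, 0), by simpa [pairing] using hy⟩

theorem kerdockForm_add (hodd : Odd (finrank (ZMod 2) F)) (s : F) (u w : F × ZMod 2) :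
    kerdockForm s (u + w) = kerdockForm s u + kerdockForm s w + pairing u (kerdockPolar s w) := by
  have hmul : tr (u.1 * (s ^ 2 * w.1 + algebraMap (ZMod 2) F (tr (s * w.1) + w.2) * s))
      = tr (s * u.1 * (s * w.1)) + (tr (s * w.1) + w.2) * tr (s * u.1) := by
    rw [show u.1 * (s ^ 2 * w.1 + algebraMap (ZMod 2) F (tr (s * w.1) + w.2) * s)
        = s * u.1 * (s * w.1) + algebraMap (ZMod 2) F (tr (s * w.1) + w.2) * (s * u.1) by ring,
      map_add, trace_algebraMap_mul]
  simp only [kerdockForm, kerdockPolar, pairing, hmul, Prod.fst_add, Prod.snd_add]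
  rw [mul_add s, traceQuadratic_add hodd, map_add]
  ring

end Kerdock

section KerdockVectors

variable {F : Type*} [Field F] [Algebra (ZMod 2) F] [Fintype F]

attribute [local instance] charP_two_of_algebra

def kerdockVector (s : F) (b : F × ZMod 2) : EuclideanSpace ℝ (F × ZMod 2) :=
  WithLp.toLp 2 fun v => signChar (kerdockForm s v + pairing b v)

theorem inner_kerdockVector (s s' : F) (b b' : F × ZMod 2) :
    ⟪kerdockVector s b, kerdockVector s' b'⟫
      = ∑ v, signChar (kerdockForm s v + pairing b v + (kerdockForm s' v + pairing b' v)) := by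
  simp [kerdockVector, PiLp.inner_apply, AddChar.map_add_eq_mul, mul_comm]

theorem inner_kerdockVector_self (s : F) (b : F × ZMod 2) :
    ⟪kerdockVector s b, kerdockVector s b⟫ = Fintype.card (F × ZMod 2) := by
  rw [inner_kerdockVector]
  simp [CharTwo.add_self_eq_zero]

theorem inner_kerdockVector_of_ne (s : F) {b b' : F × ZMod 2} (hb : b ≠ b') :
    ⟪kerdockVector s b, kerdockVector s b'⟫ = 0 := by
  have hcancel : ∀ v, kerdockForm s v + pairing b v + (kerdockForm s v + pairing b' v)
      = pairing (b + b') v := fun v => by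
    rw [pairing_add_left]
    linear_combination CharTwo.add_self_eq_zero (kerdockForm s v)
  obtain ⟨z, hz⟩ :=
    exists_pairing_ne_zero (b := b + b') (by rwa [← CharTwo.sub_eq_add, sub_ne_zero])
  rw [inner_kerdockVector, sum_congr rfl fun v _ => congrArg signChar (hcancel v)]
  exact sum_signChar_eq_zero _ (pairing_add_right _) hz

theorem abs_inner_kerdockVector_of_ne (hodd : Odd (finrank (ZMod 2) F)) {s s' : F} (hs : s ≠ s')
    (b b' : F × ZMod 2) :
    |⟪kerdockVector s b, kerdockVector s' b'⟫| = √(Fintype.card (F × ZMod 2)) := by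
  rw [← Real.sqrt_sq_eq_abs, inner_kerdockVector, sq_sum_signChar_eq_card _
    (fun u w => pairing u (kerdockPolar s w + kerdockPolar s' w))]
  · intro u w
    simp only [kerdockForm_add hodd, pairing_add_right]
    ring
  · intro u u' w
    exact pairing_add_left u u' _
  · intro w hw
    have hc : kerdockPolar s w + kerdockPolar s' w = 0 := by
      by_contra hc
      obtain ⟨v, hv⟩ := exists_pairing_ne_zero hc
      exact hv (by rw [pairing_comm]; exact hw v)
    rw [← CharTwo.sub_eq_add, sub_eq_zero] at hc
    exact eq_zero_of_kerdockPolar_eq hodd hs hc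

theorem inner_single_zero_kerdockVector [DecidableEq F] (s : F) (b : F × ZMod 2) :
    ⟪EuclideanSpace.single 0 1, kerdockVector s b⟫ = 1 := by
  simp [EuclideanSpace.inner_single_left, kerdockVector]

end KerdockVectors

end

end DeCaen

open DeCaen in
/-- De Caen's construction: for `n = 3·2^(2t-1) - 1` there exists an equiangular
set of `(2/9)(n+1)²` unit vectors in `ℝⁿ`. -/
theorem de_caen_equiangular (t : ℕ) (ht : 0 < t) (n : ℕ)
    (hn : n = 3 * 2 ^ (2 * t - 1) - 1) :
    ∃ S : Finset (EuclideanSpace ℝ (Fin n)),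
      (∀ p ∈ S, ‖p‖ = 1) ∧
      (S.card : ℝ) = (2 / 9) * ((n : ℝ) + 1) ^ 2 ∧
      ∃ α : ℝ, ∀ p ∈ S, ∀ q ∈ S, p ≠ q → ⟪p, q⟫ = α ∨ ⟪p, q⟫ = -α := by
  classical
  set m := 2 * t - 1
  have hm : m ≠ 0 := by omega
  let _ : Fintype (GaloisField 2 m) := Fintype.ofFinite _
  have hodd : Odd (finrank (ZMod 2) (GaloisField 2 m)) := by
    rw [GaloisField.finrank 2 hm]
    exact ⟨t - 1, by omega⟩
  have hcard : Fintype.card (GaloisField 2 m) = 2 ^ m := by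
    rw [Fintype.card_eq_nat_card, GaloisField.card 2 m hm]
  have hcard' : Fintype.card (GaloisField 2 m × ZMod 2) = 2 ^ m * 2 := by
    rw [Fintype.card_prod, hcard, ZMod.card]
  have hn1 : n + 1 = 3 * 2 ^ m := by
    have := Nat.one_le_two_pow (n := m)
    omega
  obtain ⟨S, ⟨hunit, hangle⟩, hS⟩ := exists_isEquiangular_of_unbiased (n := n)
    (by rw [finrank_euclideanSpace, hcard', hcard]; omega)
    (by positivity) (Real.sqrt_pos.2 (by positivity)) kerdockVector (EuclideanSpace.single 0 1)
    inner_single_zero_kerdockVector inner_kerdockVector_self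
    (fun s _ _ => inner_kerdockVector_of_ne s)
    (fun _ _ b b' hs => abs_inner_kerdockVector_of_ne hodd hs b b')
  refine ⟨S, hunit, ?_, hangle⟩
  rw [hS, hcard, hcard', show (n : ℝ) + 1 = 3 * 2 ^ m by exact_mod_cast hn1]
  push_cast
  ring
end

section
/- Let s = 2t > 0 be an even integer and n > 0 a positive integer. Let S be a finite set of unit vectors in ℝⁿ and let a₁, …, a_t be real numbers with 0 < aᵢ < 1 for each i, such that every inner product of two distinct vectors of S lies in {a₁, …, a_t, -a₁, …, -a_t}. Then |S| ≤ C(n+s-1, s). -/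
/-!
For each `p ∈ S` the polynomial `F_p(x) = ∏ᵢ (⟪p, x⟫² - aᵢ² ‖x‖²)` is homogeneous of degree
`2t` (the factor `‖x‖²` in place of the constant `1` is what makes it homogeneous, and it
equals `1` on `S`). It vanishes at every `q ∈ S \ {p}`, since `⟪p, q⟫ = ±aᵢ` for some `i`,
but not at `p`, since `aᵢ² < 1`. Evaluation at the points of `S` therefore shows that the `F_p`
are linearly independent in the space of degree-`2t` forms in `n` variables, whose dimension
is the number of degree-`2t` monomials, `C(n + 2t - 1, 2t)`.
-/

open RealInnerProductSpace

namespace MvPolynomial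

theorem finrank_homogeneousSubmodule (σ K : Type*) [Field K] (k : ℕ) :
    Module.finrank K (homogeneousSubmodule σ K k) = (Nat.card σ + k - 1).choose k := by
  classical
  rw [homogeneousSubmodule_eq_finsupp_supported, ← restrictSupport,
    Module.finrank_eq_nat_card_basis (basisRestrictSupport K _), ← Sym.natCard_sym_eq_choose]
  exact Nat.card_congr
    ((Equiv.subtypeEquivRight fun _ => Iff.rfl).trans (Sym.equivNatSum σ k).symm)

theorem card_le_choose_of_isHomogeneous_of_eval_diagonal {σ K ι : Type*} [Finite σ] [Field K]
    [Fintype ι] {k : ℕ} (x : ι → σ → K) (P : ι → MvPolynomial σ K)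
    (hP : ∀ i, (P i).IsHomogeneous k) (hdiag : ∀ i, eval (x i) (P i) ≠ 0)
    (hoff : Pairwise fun i j => eval (x i) (P j) = 0) :
    Fintype.card ι ≤ (Nat.card σ + k - 1).choose k := by
  have := Module.Finite.iff_fg.mpr (homogeneousSubmodule_fg σ K k)
  let v : ι → homogeneousSubmodule σ K k := fun i => ⟨P i, hP i⟩
  let evalAt : ι → Module.Dual K (homogeneousSubmodule σ K k) := fun i =>
    (eval (x i) (P i))⁻¹ • ((aeval (x i)).toLinearMap ∘ₗ (homogeneousSubmodule σ K k).subtype)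
  have hv : LinearIndependent K v :=
    .of_pairwise_dual_eq_zero_one v evalAt (fun i j hij => by simp [evalAt, v, hoff hij])
      fun i => by simp [evalAt, v, hdiag i]
  exact finrank_homogeneousSubmodule σ K k ▸ hv.fintype_card_le_finrank

end MvPolynomial

namespace EuclideanSpace

open MvPolynomial

variable {ι : Type*} [Fintype ι]

noncomputable def innerPoly (p : EuclideanSpace ℝ ι) : MvPolynomial ι ℝ :=
  ∑ j, C (p j) * X j

theorem isHomogeneous_innerPoly (p : EuclideanSpace ℝ ι) : (innerPoly p).IsHomogeneous 1 :=
  .sum _ _ _ fun j _ => isHomogeneous_C_mul_X (p j) j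

theorem eval_innerPoly (p q : EuclideanSpace ℝ ι) : eval q.ofLp (innerPoly p) = ⟪p, q⟫ := by
  simp [innerPoly, PiLp.inner_apply, mul_comm]

variable (ι) in
noncomputable def normSqPoly : MvPolynomial ι ℝ :=
  ∑ j, X j ^ 2

theorem isHomogeneous_normSqPoly : (normSqPoly ι).IsHomogeneous 2 :=
  .sum _ _ _ fun j _ => isHomogeneous_X_pow j 2

theorem eval_normSqPoly (q : EuclideanSpace ℝ ι) : eval q.ofLp (normSqPoly ι) = ‖q‖ ^ 2 := by
  simp [normSqPoly, EuclideanSpace.norm_sq_eq]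

variable {t : ℕ} (a : Fin t → ℝ)

noncomputable def antipodalAnnihilator (p : EuclideanSpace ℝ ι) : MvPolynomial ι ℝ :=
  ∏ i, (innerPoly p ^ 2 - C (a i ^ 2) * normSqPoly ι)

theorem isHomogeneous_antipodalAnnihilator (p : EuclideanSpace ℝ ι) :
    (antipodalAnnihilator a p).IsHomogeneous (2 * t) := by
  have hdeg : 2 * t = ∑ _i : Fin t, 2 := by simp [mul_comm]
  rw [antipodalAnnihilator, hdeg]
  exact .prod _ _ _ fun i _ =>
    ((isHomogeneous_innerPoly p).pow 2).sub (isHomogeneous_normSqPoly.C_mul _)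

theorem eval_antipodalAnnihilator (p q : EuclideanSpace ℝ ι) :
    eval q.ofLp (antipodalAnnihilator a p) = ∏ i, (⟪p, q⟫ ^ 2 - a i ^ 2 * ‖q‖ ^ 2) := by
  simp [antipodalAnnihilator, eval_innerPoly, eval_normSqPoly]

end EuclideanSpace

open EuclideanSpace in
theorem antipodal_distance_set_bound_general (n t : ℕ)
    (a : Fin t → ℝ) (ha : ∀ i, 0 < a i ∧ a i < 1)
    (S : Finset (EuclideanSpace ℝ (Fin n)))
    (hunit : ∀ p ∈ S, ‖p‖ = 1)
    (hdist : ∀ p ∈ S, ∀ q ∈ S, p ≠ q → (∃ i, ⟪p, q⟫ = a i) ∨ (∃ i, ⟪p, q⟫ = -a i)) :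
    S.card ≤ (n + 2 * t - 1).choose (2 * t) := by
  have hdiag (p : S) :
      MvPolynomial.eval (p : EuclideanSpace ℝ (Fin n)).ofLp (antipodalAnnihilator a p) ≠ 0 := by
    rw [eval_antipodalAnnihilator, real_inner_self_eq_norm_sq, hunit p p.2]
    refine Finset.prod_ne_zero_iff.mpr fun i _ => ?_
    nlinarith [ha i]
  have hoff (q p : S) (hqp : q ≠ p) :
      MvPolynomial.eval (q : EuclideanSpace ℝ (Fin n)).ofLp (antipodalAnnihilator a p) = 0 := by
    rw [eval_antipodalAnnihilator, hunit q q.2]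
    obtain ⟨i, hi⟩ | ⟨i, hi⟩ := hdist p p.2 q q.2 (Subtype.coe_ne_coe.mpr hqp.symm) <;>
      exact Finset.prod_eq_zero (Finset.mem_univ i) (by rw [hi]; ring)
  have key := MvPolynomial.card_le_choose_of_isHomogeneous_of_eval_diagonal _ _
    (fun p : S => isHomogeneous_antipodalAnnihilator a (p : EuclideanSpace ℝ (Fin n))) hdiag hoff
  rwa [Fintype.card_coe, Nat.card_eq_fintype_card, Fintype.card_fin] at key

/-- Delsarte–Goethals–Seidel: a spherical `2t`-distance set whose inner products
are `a₁, …, a_t, -a₁, …, -a_t` with `0 < aᵢ < 1` has at most `C(n+s-1, s)`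
elements, where `s = 2t`. -/
theorem antipodal_distance_set_bound (n t : ℕ) (hn : 0 < n) (ht : 0 < t)
    (a : Fin t → ℝ) (ha : ∀ i, 0 < a i ∧ a i < 1)
    (S : Finset (EuclideanSpace ℝ (Fin n)))
    (hunit : ∀ p ∈ S, ‖p‖ = 1)
    (hdist : ∀ p ∈ S, ∀ q ∈ S, p ≠ q → (∃ i, ⟪p, q⟫ = a i) ∨ (∃ i, ⟪p, q⟫ = -a i)) :
    S.card ≤ (n + 2 * t - 1).choose (2 * t) :=
  antipodal_distance_set_bound_general n t a ha S hunit hdist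
end

section
/- Let n > 0 be a positive integer and s > 0 an even integer. The number of vectors α = (α₁, …, α_n) ∈ ℕⁿ with α₁ ≤ 1, α₁ + ⋯ + α_n even, and α₁ + ⋯ + α_n ≤ s equals C(n+s-1, s). -/
/-!
Since `s` is even, an admissible `α` is determined by its tail `γ = (α₂, …, αₙ)`, which may be
any tuple with `∑ γ ≤ s`: `α₁` must be the parity bit of `∑ γ`, and `α₁ + ∑ γ ≤ s` then holds
automatically. Adding the slack `s - ∑ γ` as a new coordinate identifies these tails with the
`n`-tuples of sum exactly `s`, which stars and bars counts as `C(n+s-1, s)`.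
-/

theorem card_tuples_sum_eq (k s : ℕ) :
    Nat.card {β : Fin k → ℕ // ∑ i, β i = s} = (k + s - 1).choose s := by
  rw [← Nat.card_congr (Sym.equivNatSumOfFintype (Fin k) s), Nat.card_eq_fintype_card,
    Sym.card_sym_eq_choose, Fintype.card_fin]

theorem card_tuples_sum_le (m s : ℕ) :
    Nat.card {γ : Fin m → ℕ // ∑ i, γ i ≤ s} = (m + s).choose s := by
  have e : {γ : Fin m → ℕ // ∑ i, γ i ≤ s} ≃ {β : Fin (m + 1) → ℕ // ∑ i, β i = s} :=
    { toFun γ := ⟨Fin.cons (s - ∑ i, γ.1 i) γ.1, by simp only [Fin.sum_cons]; omega⟩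
      invFun β := ⟨Fin.tail β.1, by
        have hβ := β.2
        rw [← Fin.cons_self_tail β.1, Fin.sum_cons] at hβ
        omega⟩
      left_inv γ := rfl
      right_inv := by
        rintro ⟨β, hβ⟩
        induction β using Fin.consCases with
        | cons a γ =>
          rw [Fin.sum_cons] at hβ
          ext1
          simp only [Fin.tail_cons]
          congr
          omega }
  rw [Nat.card_congr e, card_tuples_sum_eq, Nat.add_right_comm, Nat.add_sub_cancel]

theorem Nat.le_one_and_even_add_and_add_le_iff {a t s : ℕ} (hs : Even s) :
    a ≤ 1 ∧ Even (a + t) ∧ a + t ≤ s ↔ a = t % 2 ∧ t ≤ s := by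
  rw [Nat.even_iff] at hs ⊢
  omega

theorem card_tuples_head_parity_sum_le (m s : ℕ) (hs : Even s) :
    Nat.card {α : Fin (m + 1) → ℕ // α 0 ≤ 1 ∧ Even (∑ i, α i) ∧ ∑ i, α i ≤ s} =
      Nat.card {γ : Fin m → ℕ // ∑ i, γ i ≤ s} := by
  have cons_spec_iff (a : ℕ) (γ : Fin m → ℕ) :
      (Fin.cons a γ : Fin (m + 1) → ℕ) 0 ≤ 1 ∧ Even (∑ i, (Fin.cons a γ : Fin (m + 1) → ℕ) i) ∧
        ∑ i, (Fin.cons a γ : Fin (m + 1) → ℕ) i ≤ s ↔ a = (∑ i, γ i) % 2 ∧ ∑ i, γ i ≤ s := by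
    rw [Fin.sum_cons, Fin.cons_zero, Nat.le_one_and_even_add_and_add_le_iff hs]
  refine Nat.card_congr
    { toFun α := ⟨Fin.tail α.1, ?_⟩
      invFun γ := ⟨Fin.cons ((∑ i, γ.1 i) % 2) γ.1, (cons_spec_iff _ _).2 ⟨rfl, γ.2⟩⟩
      left_inv := ?_
      right_inv γ := rfl }
  · obtain ⟨α, hα⟩ := α
    rw [← Fin.cons_self_tail α, cons_spec_iff] at hα
    exact hα.2
  · rintro ⟨α, hα⟩
    induction α using Fin.consCases with
    | cons a γ =>
      rw [cons_spec_iff] at hα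
      ext1
      simp only [Fin.tail_cons, hα.1]

theorem count_special_monomials_general (n s : ℕ) (hn : 0 < n)
    (hseven : Even s) :
    {α : Fin n → ℕ | α ⟨0, hn⟩ ≤ 1 ∧ Even (∑ i, α i) ∧ ∑ i, α i ≤ s}.ncard
      = (n + s - 1).choose s := by
  obtain ⟨m, rfl⟩ : ∃ m, n = m + 1 := ⟨n - 1, by omega⟩
  rw [← Nat.card_coe_set_eq, Nat.add_right_comm, Nat.add_sub_cancel]
  exact (card_tuples_head_parity_sum_le m s hseven).trans (card_tuples_sum_le m s)

/-- The number of `n`-tuples `α` of nonnegative integers with `α₁ ≤ 1`,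
`Σᵢ αᵢ` even and `Σᵢ αᵢ ≤ s` (where `s` is even and positive) equals
`C(n+s-1, s)`. -/
theorem count_special_monomials (n s : ℕ) (hn : 0 < n) (hs : 0 < s)
    (hseven : Even s) :
    {α : Fin n → ℕ | α ⟨0, hn⟩ ≤ 1 ∧ Even (∑ i, α i) ∧ ∑ i, α i ≤ s}.ncard
      = (n + s - 1).choose s :=
  count_special_monomials_general n s hn hseven
end

section
/- Let n > 1 be a positive integer and s > 0 an even integer. The map sending α = (α₁, …, α_n) to (α₂, …, α_n) is a bijection from the set M(n,s) = {α ∈ ℕⁿ : α₁ ≤ 1, Σᵢ αᵢ is even, Σᵢ αᵢ ≤ s} onto the set N(n-1,s) = {β ∈ ℕ^{n-1} : Σᵢ βᵢ ≤ s}. -/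
/-!
Dropping the first coordinate loses only `α 0 ∈ {0, 1}`, and the parity condition pins it down
as the parity of the remaining sum. So the inverse prepends `(∑ β) % 2` to `β`; this stays within
the bound `s` because an odd sum `∑ β ≤ s` with `s` even is in fact `< s`.
-/

variable {m s : ℕ}

lemma head_eq_sum_tail_mod_two {α : Fin (m + 1) → ℕ} (h0 : α 0 ≤ 1) (heven : Even (∑ i, α i)) :
    α 0 = (∑ i, Fin.tail α i) % 2 := by
  rw [Fin.sum_univ_succ, Nat.even_iff] at heven
  simp only [Fin.tail]
  omega

lemma add_mod_two_le_of_even {a : ℕ} (hs : Even s) (ha : a ≤ s) : a + a % 2 ≤ s := by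
  rw [Nat.even_iff] at hs
  omega

theorem bijOn_tail_of_even (hs : Even s) :
    Set.BijOn (Fin.tail : (Fin (m + 1) → ℕ) → Fin m → ℕ)
      {α | α 0 ≤ 1 ∧ Even (∑ i, α i) ∧ ∑ i, α i ≤ s} {β | ∑ i, β i ≤ s} := by
  let prependParity (β : Fin m → ℕ) : Fin (m + 1) → ℕ := Fin.cons ((∑ i, β i) % 2) β
  refine Set.InvOn.bijOn (f' := prependParity) ⟨?_, ?_⟩ ?_ ?_
  · rintro α ⟨h0, heven, -⟩
    change Fin.cons _ _ = α
    rw [← head_eq_sum_tail_mod_two h0 heven]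
    exact Fin.cons_self_tail α
  · intro β _
    exact Fin.tail_cons (α := fun _ => ℕ) _ β
  · rintro α ⟨-, -, hle⟩
    rw [Fin.sum_univ_succ] at hle
    exact le_of_add_le_right hle
  · intro β hβ
    refine ⟨Nat.le_of_lt_succ (Nat.mod_lt _ two_pos), ?_, ?_⟩
    · simp only [prependParity, Fin.sum_cons, Nat.even_iff]
      omega
    · simpa only [prependParity, Fin.sum_cons, add_comm] using add_mod_two_le_of_even hs hβ

/-- The map dropping the first coordinate is a bijection from
`M(n,s) = {α ∈ ℕⁿ : α₁ ≤ 1, Σ αᵢ even, Σ αᵢ ≤ s}` onto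
`N(n-1,s) = {β ∈ ℕ^(n-1) : Σ βᵢ ≤ s}`, for `n > 1` and `s > 0` even. -/
theorem drop_first_bijection (n s : ℕ) (hn : 1 < n)
    (hseven : Even s) :
    Set.BijOn (fun (α : Fin n → ℕ) (i : Fin (n - 1)) => α ⟨i.val + 1, by omega⟩)
      {α : Fin n → ℕ | α ⟨0, by omega⟩ ≤ 1 ∧ Even (∑ i, α i) ∧ ∑ i, α i ≤ s}
      {β : Fin (n - 1) → ℕ | ∑ i, β i ≤ s} := by
  obtain ⟨m, rfl⟩ : ∃ m, n = m + 1 := ⟨n - 1, by omega⟩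
  -- now the map is `Fin.tail` and `Fin (m + 1 - 1)` is `Fin m`, both up to defeq
  exact bijOn_tail_of_even hseven
end
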